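/- Let m ≥ 1 be an integer, g, Δ, ε real, λ := 2m − g² − ε, and μ := (λ+g²)² − 4g²(λ+g²) − Δ². Consider the non-spherical principal series action ϖ_{2,a} with a = 1−2m, and let K̃ be the operator (½H − E + (−½ − m))∘(F + 4g²) + (−m + ε)(H − ½) + (μ − 4εg² − ε²) on V, and Λ̃ := 4g²(a/2 − ½ − m) + (−m + ε)(a − ½). Then for every finitely supported family (c_n)_{n∈ℤ} of complex numbers with c_n = 0 unless −m ≤ n ≤ m−1, the vector ν = Σ_n c_n e_n satisfies K̃ν = Λ̃ν if and only if for every n ∈ ℤ: (m+n+1)(m−n)·c_{n+1} + [(m−n)² − 4g²(m−n) − Δ² − 2ε(m−n)]·c_n + 4g²(m−n)·c_{n−1} = 0. -/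

import Mathlib

/-! The operators `H`, `E`, `F` of `ϖ_{2,a}` are weighted shifts by `0`, `+1`, `-1`, so `K̃ - Λ̃`
acts on the coefficients of `ν` as a three-term difference operator. For `a = 1 - 2m` and the
given `α, β, γ, C` its coefficients reduce, by a polynomial identity, to those of the recurrence. -/

/-- The space `V` of finitely supported functions `ℤ → ℂ`. -/
abbrev Vsl2 : Type := ℤ →₀ ℂ

/-- The standard basis vectors `e n` of `V`. -/
noncomputable def eV (n : ℤ) : Vsl2 := Finsupp.single n 1

/-- The operator `H` of the spherical principal series `ϖ_{1,a}`: `H e_n = 2n·e_n`. -/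
noncomputable def Hsph : Vsl2 →ₗ[ℂ] Vsl2 :=
  Finsupp.lsum ℂ fun n => (2 * (n : ℂ)) • Finsupp.lsingle n

/-- The operator `E` of the spherical principal series `ϖ_{1,a}`: `E e_n = (n + a/2)·e_{n+1}`. -/
noncomputable def Esph (a : ℂ) : Vsl2 →ₗ[ℂ] Vsl2 :=
  Finsupp.lsum ℂ fun n => ((n : ℂ) + a / 2) • Finsupp.lsingle (n + 1)

/-- The operator `F` of the spherical principal series `ϖ_{1,a}`: `F e_n = (−n + a/2)·e_{n−1}`. -/
noncomputable def Fsph (a : ℂ) : Vsl2 →ₗ[ℂ] Vsl2 :=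
  Finsupp.lsum ℂ fun n => (-(n : ℂ) + a / 2) • Finsupp.lsingle (n - 1)

/-- The operator `H` of the non-spherical principal series `ϖ_{2,a}`: `H e_n = (2n+1)·e_n`. -/
noncomputable def Hnsph : Vsl2 →ₗ[ℂ] Vsl2 :=
  Finsupp.lsum ℂ fun n => (2 * (n : ℂ) + 1) • Finsupp.lsingle n

/-- The operator `E` of the non-spherical principal series `ϖ_{2,a}`:
`E e_n = (n + (a+1)/2)·e_{n+1}`. -/
noncomputable def Ensph (a : ℂ) : Vsl2 →ₗ[ℂ] Vsl2 :=
  Finsupp.lsum ℂ fun n => ((n : ℂ) + (a + 1) / 2) • Finsupp.lsingle (n + 1)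

/-- The operator `F` of the non-spherical principal series `ϖ_{2,a}`:
`F e_n = (−n + (a−1)/2)·e_{n−1}`. -/
noncomputable def Fnsph (a : ℂ) : Vsl2 →ₗ[ℂ] Vsl2 :=
  Finsupp.lsum ℂ fun n => (-(n : ℂ) + (a - 1) / 2) • Finsupp.lsingle (n - 1)

/-- The operator `(½H − E + α)∘(F + β) + γ(H − ½) + C` built from operators `Hop`, `Eop`,
`Fop` on `V`, scalars acting as scalar multiples of the identity. -/
noncomputable def Kop (Hop Eop Fop : Vsl2 →ₗ[ℂ] Vsl2) (α β γ C : ℂ) : Vsl2 →ₗ[ℂ] Vsl2 :=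
  ((1 / 2 : ℂ) • Hop - Eop + α • LinearMap.id) ∘ₗ (Fop + β • LinearMap.id) +
    γ • (Hop - (1 / 2 : ℂ) • LinearMap.id) + C • LinearMap.id

theorem Finsupp.lsum_smul_lsingle_equiv_apply {α β R : Type*} [CommSemiring R] (σ : α ≃ β)
    (c : α → R) (ν : α →₀ R) (k : β) :
    Finsupp.lsum R (fun n => c n • Finsupp.lsingle (R := R) (M := R) (σ n)) ν k =
      c (σ.symm k) * ν (σ.symm k) := by
  rw [Finsupp.lsum_apply, Finsupp.sum_apply, Finsupp.sum_eq_single (σ.symm k)]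
  · simp
  · intro n _ hn
    have hσ : σ n ≠ k := fun h => hn (σ.eq_symm_apply.mpr h)
    simp [hσ]
  · simp

lemma Hnsph_apply (ν : Vsl2) (n : ℤ) : Hnsph ν n = (2 * (n : ℂ) + 1) * ν n :=
  Finsupp.lsum_smul_lsingle_equiv_apply (Equiv.refl ℤ) _ ν n

lemma Ensph_apply (a : ℂ) (ν : Vsl2) (n : ℤ) :
    Ensph a ν n = ((n : ℂ) - 1 + (a + 1) / 2) * ν (n - 1) := by
  refine (Finsupp.lsum_smul_lsingle_equiv_apply (Equiv.addRight 1)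
    (fun k : ℤ => (k : ℂ) + (a + 1) / 2) ν n).trans ?_
  change (((n - 1 : ℤ) : ℂ) + (a + 1) / 2) * ν (n - 1) = _
  push_cast
  ring

lemma Fnsph_apply (a : ℂ) (ν : Vsl2) (n : ℤ) :
    Fnsph a ν n = (-(n : ℂ) - 1 + (a - 1) / 2) * ν (n + 1) := by
  refine (Finsupp.lsum_smul_lsingle_equiv_apply (Equiv.subRight 1)
    (fun k : ℤ => -(k : ℂ) + (a - 1) / 2) ν n).trans ?_
  change (-((n + 1 : ℤ) : ℂ) + (a - 1) / 2) * ν (n + 1) = _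
  push_cast
  ring

lemma Kop_nonspherical_apply (a α β γ C : ℂ) (ν : Vsl2) (n : ℤ) :
    Kop Hnsph (Ensph a) (Fnsph a) α β γ C ν n =
      (n + 1 / 2 + α) * ((a - 1) / 2 - n - 1) * ν (n + 1) +
        ((n + 1 / 2 + α) * β + (n + (a - 1) / 2) * (n - (a - 1) / 2) + γ * (2 * n + 1 / 2) + C) *
          ν n -
        β * (n + (a - 1) / 2) * ν (n - 1) := by
  simp only [Kop, LinearMap.add_apply, LinearMap.comp_apply, LinearMap.sub_apply,
    LinearMap.smul_apply, LinearMap.id_apply, Finsupp.add_apply, Finsupp.sub_apply,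
    Finsupp.smul_apply, smul_eq_mul, Hnsph_apply, Ensph_apply, Fnsph_apply, sub_add_cancel]
  push_cast
  ring

theorem nonspherical_Ktilde_eigenproblem_general (m : ℤ) (g Δ ε : ℝ)
    (lam : ℝ) (hlam : lam = 2 * m - g ^ 2 - ε)
    (μ : ℝ) (hμ : μ = (lam + g ^ 2) ^ 2 - 4 * g ^ 2 * (lam + g ^ 2) - Δ ^ 2)
    (a : ℝ) (ha : a = 1 - 2 * m)
    (Kt : Vsl2 →ₗ[ℂ] Vsl2)
    (hKt : Kt = Kop Hnsph (Ensph (a : ℂ)) (Fnsph (a : ℂ))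
      (-(1 / 2) - (m : ℂ)) ((4 * g ^ 2 : ℝ) : ℂ) ((-(m : ℝ) + ε : ℝ) : ℂ)
      ((μ - 4 * ε * g ^ 2 - ε ^ 2 : ℝ) : ℂ))
    (Λt : ℝ) (hΛt : Λt = 4 * g ^ 2 * (a / 2 - 1 / 2 - m) + (-m + ε) * (a - 1 / 2))
    (ν : Vsl2) :
    Kt ν = (Λt : ℂ) • ν ↔
      ∀ n : ℤ,
        ((m : ℂ) + n + 1) * ((m : ℂ) - n) * ν (n + 1) +
          (((m : ℂ) - n) ^ 2 - 4 * (g : ℂ) ^ 2 * ((m : ℂ) - n) - (Δ : ℂ) ^ 2 -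
            2 * (ε : ℂ) * ((m : ℂ) - n)) * ν n +
          4 * (g : ℂ) ^ 2 * ((m : ℂ) - n) * ν (n - 1) = 0 := by
  subst hlam hμ ha hKt hΛt
  rw [Finsupp.ext_iff]
  refine forall_congr' fun n => ?_
  rw [Finsupp.smul_apply, smul_eq_mul, ← sub_eq_zero, Kop_nonspherical_apply]
  congr! 1
  push_cast
  ring

/-- Non-spherical `ϖ_{2,1−2m}`-eigenproblem for `K̃` on `F_{2m}` (the case `λ = 2m − g² − ε`):
the eigenvalue equation `K̃ν = Λ̃ν` for `ν = Σ c_n e_n` supported in `−m ≤ n ≤ m−1` is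
equivalent to the three-term recurrence
`(m+n+1)(m−n)c_{n+1} + [(m−n)² − 4g²(m−n) − Δ² − 2ε(m−n)]c_n + 4g²(m−n)c_{n−1} = 0`. -/
theorem nonspherical_Ktilde_eigenproblem (m : ℤ) (hm : 1 ≤ m) (g Δ ε : ℝ)
    (lam : ℝ) (hlam : lam = 2 * m - g ^ 2 - ε)
    (μ : ℝ) (hμ : μ = (lam + g ^ 2) ^ 2 - 4 * g ^ 2 * (lam + g ^ 2) - Δ ^ 2)
    (a : ℝ) (ha : a = 1 - 2 * m)
    (Kt : Vsl2 →ₗ[ℂ] Vsl2)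
    (hKt : Kt = Kop Hnsph (Ensph (a : ℂ)) (Fnsph (a : ℂ))
      (-(1 / 2) - (m : ℂ)) ((4 * g ^ 2 : ℝ) : ℂ) ((-(m : ℝ) + ε : ℝ) : ℂ)
      ((μ - 4 * ε * g ^ 2 - ε ^ 2 : ℝ) : ℂ))
    (Λt : ℝ) (hΛt : Λt = 4 * g ^ 2 * (a / 2 - 1 / 2 - m) + (-m + ε) * (a - 1 / 2))
    (ν : Vsl2) (hsupp : ∀ n : ℤ, (n < -m ∨ m - 1 < n) → ν n = 0) :
    Kt ν = (Λt : ℂ) • ν ↔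
      ∀ n : ℤ,
        ((m : ℂ) + n + 1) * ((m : ℂ) - n) * ν (n + 1) +
          (((m : ℂ) - n) ^ 2 - 4 * (g : ℂ) ^ 2 * ((m : ℂ) - n) - (Δ : ℂ) ^ 2 -
            2 * (ε : ℂ) * ((m : ℂ) - n)) * ν n +
          4 * (g : ℂ) ^ 2 * ((m : ℂ) - n) * ν (n - 1) = 0 :=
  nonspherical_Ktilde_eigenproblem_general m g Δ ε lam hlam μ hμ a ha Kt hKt Λt hΛt ν
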